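/- Let f, g and h be entire functions given by everywhere absolutely convergent vector valued Dirichlet series, and let p ≥ 0, q ≥ 0, m ≥ 0 be integers with 0 < λ_h^{(m,q)}(f) ≤ ρ_h^{(m,q)}(f) < +∞ and 0 < λ_h^{(m,p)}(g) ≤ ρ_h^{(m,p)}(g) < +∞. If λ_h^{(m,p)}(g) = ρ_h^{(m,p)}(g), then ρ_g^{(p,q)}(f) = ρ_h^{(m,q)}(f)/ρ_h^{(m,p)}(g) and λ_g^{(p,q)}(f) = λ_h^{(m,q)}(f)/λ_h^{(m,p)}(g). If instead λ_h^{(m,q)}(f) = ρ_h^{(m,q)}(f), then ρ_g^{(p,q)}(f) = λ_h^{(m,q)}(f)/λ_h^{(m,p)}(g) and λ_g^{(p,q)}(f) = ρ_h^{(m,q)}(f)/ρ_h^{(m,p)}(g). -/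

import Mathlib

open Filter Topology

noncomputable section

/-- An entire function given by an everywhere absolutely convergent
vector valued Dirichlet series, with coefficients in a Banach space `E`. -/
structure VVDS (E : Type*) [NormedAddCommGroup E] [NormedSpace ℂ E] [CompleteSpace E] where
  a : ℕ → E
  lam : ℕ → ℝ
  lam_pos : ∀ n, 0 < lam n
  lam_strictMono : StrictMono lam
  lam_tendsto : Tendsto lam atTop atTop
  log_index_bound : ∃ D : ℝ, ∀ᶠ n : ℕ in atTop, Real.log (n : ℝ) / lam n ≤ D
  coeff_decay : Tendsto (fun n => Real.log ‖a n‖ / lam n) atTop atBot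
  abs_conv : ∀ s : ℂ, Summable (fun n => Real.exp (s.re * lam n) * ‖a n‖)

variable {E F G : Type*} [NormedAddCommGroup E] [NormedSpace ℂ E] [CompleteSpace E]
  [NormedAddCommGroup F] [NormedSpace ℂ F] [CompleteSpace F]
  [NormedAddCommGroup G] [NormedSpace ℂ G] [CompleteSpace G]

/-- The entire function defined by the vector valued Dirichlet series. -/
def VVDS.toFun (f : VVDS E) (s : ℂ) : E := ∑' n, Complex.exp (s * (f.lam n : ℂ)) • f.a n

/-- The maximum modulus function `M_f(σ) = sup_t ‖f(σ+it)‖`. -/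
def VVDS.M (f : VVDS E) (σ : ℝ) : ℝ := ⨆ t : ℝ, ‖f.toFun ((σ : ℂ) + (t : ℂ) * Complex.I)‖

/-- The inverse function of the maximum modulus function. -/
def VVDS.Minv (f : VVDS E) (y : ℝ) : ℝ := sInf {σ : ℝ | y ≤ f.M σ}

/-- The (p,q)-th relative Ritt order of `f` with respect to `g`. -/
def relRittOrder (p q : ℕ) (f : VVDS E) (g : VVDS F) : EReal :=
  limsup (fun σ : ℝ =>
    ((Real.log^[p] (g.Minv (f.M σ)) / Real.log^[q] σ : ℝ) : EReal)) atTop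

/-- The (p,q)-th relative Ritt lower order of `f` with respect to `g`. -/
def relRittLowerOrder (p q : ℕ) (f : VVDS E) (g : VVDS F) : EReal :=
  liminf (fun σ : ℝ =>
    ((Real.log^[p] (g.Minv (f.M σ)) / Real.log^[q] σ : ℝ) : EReal)) atTop

/-- The (p,q)-th relative Ritt type of `f` with respect to `g`. -/
def relRittType (p q : ℕ) (f : VVDS E) (g : VVDS F) : EReal :=
  limsup (fun σ : ℝ =>
    ((Real.log^[p-1] (g.Minv (f.M σ)) /
      (Real.log^[q-1] σ) ^ (relRittOrder p q f g).toReal : ℝ) : EReal)) atTop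

/-- The (p,q)-th relative Ritt lower type of `f` with respect to `g`. -/
def relRittLowerType (p q : ℕ) (f : VVDS E) (g : VVDS F) : EReal :=
  liminf (fun σ : ℝ =>
    ((Real.log^[p-1] (g.Minv (f.M σ)) /
      (Real.log^[q-1] σ) ^ (relRittOrder p q f g).toReal : ℝ) : EReal)) atTop

/-- The (p,q)-th relative Ritt weak type of `f` with respect to `g`. -/
def relRittWeakType (p q : ℕ) (f : VVDS E) (g : VVDS F) : EReal :=
  liminf (fun σ : ℝ =>
    ((Real.log^[p-1] (g.Minv (f.M σ)) /
      (Real.log^[q-1] σ) ^ (relRittLowerOrder p q f g).toReal : ℝ) : EReal)) atTop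

/-- The growth indicator `τ̄_g^{(p,q)}(f)`. -/
def relRittUpperWeakType (p q : ℕ) (f : VVDS E) (g : VVDS F) : EReal :=
  limsup (fun σ : ℝ =>
    ((Real.log^[p-1] (g.Minv (f.M σ)) /
      (Real.log^[q-1] σ) ^ (relRittLowerOrder p q f g).toReal : ℝ) : EReal)) atTop

/-!
Put `I = M_g⁻¹ ∘ M_f`. By Hadamard's three lines theorem `M_g` is log-convex, hence continuous, and
as it tends to `0` at `-∞` it is strictly increasing wherever it is positive. So `M_g (I σ) = M_f σ`,
and `I` maps `atTop` onto `atTop`, with inverse `M_f⁻¹ ∘ M_g`. Hence, at `τ = I σ`,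
`log^[m] M_h⁻¹(M_f σ) / log^[q] σ = (log^[p] (I σ) / log^[q] σ) * (log^[m] M_h⁻¹(M_g τ) / log^[p] τ)`,
and the last factor has the same limsup and liminf as the ratio defining the orders of `g` relative
to `h`. What remains is the behaviour of limsup and liminf of a quotient of nonnegative functions
when numerator or denominator has equal limsup and liminf. Positive lower orders exclude
`M_f ≡ 0` and `M_g ≡ 0`, the only alternative (by Liouville) to `M → ∞`.
-/

namespace EReal

variable {α : Type*} {l : Filter α} [l.NeBot] {a b c : α → EReal}

theorem limsup_liminf_eq_div_of_factor_liminf_eq_limsup (hc : 0 ≤ᶠ[l] c)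
    (hab : a =ᶠ[l] c * b) (hb₀ : 0 < liminf b l) (hb₁ : limsup b l < ⊤)
    (hb : liminf b l = limsup b l) :
    limsup c l = limsup a l / limsup b l ∧ liminf c l = liminf a l / liminf b l := by
  have hb_nonneg : 0 ≤ᶠ[l] b := (eventually_lt_of_lt_liminf hb₀).mono fun _ h => h.le
  have hsup₀ : 0 < limsup b l := hb ▸ hb₀
  have hinf₁ : liminf b l < ⊤ := hb ▸ hb₁
  rw [limsup_congr hab, liminf_congr hab]
  refine ⟨le_antisymm ?_ ?_, le_antisymm ?_ ?_⟩
  · rw [le_div_iff_mul_le hsup₀ hb₁.ne, ← hb]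
    exact le_limsup_mul hc.frequently hb_nonneg
  · rw [div_le_iff_le_mul hsup₀ hb₁.ne, mul_comm (limsup b l)]
    exact limsup_mul_le hc.frequently hb_nonneg (.inr hb₁.ne) (.inr hsup₀.ne')
  · rw [le_div_iff_mul_le hb₀ hinf₁.ne]
    exact le_liminf_mul hc hb_nonneg
  · rw [div_le_iff_le_mul hb₀ hinf₁.ne, mul_comm c, hb]
    exact liminf_mul_le hb_nonneg hc (.inl hsup₀.ne') (.inl hb₁.ne)

theorem limsup_liminf_eq_div_of_product_liminf_eq_limsup (hc : 0 ≤ᶠ[l] c)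
    (hab : a =ᶠ[l] c * b) (hb₀ : 0 < liminf b l) (hb₁ : limsup b l < ⊤)
    (ha : liminf a l = limsup a l) :
    limsup c l = liminf a l / liminf b l ∧ liminf c l = limsup a l / limsup b l := by
  have hb_nonneg : 0 ≤ᶠ[l] b := (eventually_lt_of_lt_liminf hb₀).mono fun _ h => h.le
  have hbb : liminf b l ≤ limsup b l := liminf_le_limsup
  have hsup₀ : 0 < limsup b l := hb₀.trans_le hbb
  have hinf₁ : liminf b l < ⊤ := hbb.trans_lt hb₁
  refine ⟨le_antisymm ?_ ?_, le_antisymm ?_ ?_⟩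
  · rw [le_div_iff_mul_le hb₀ hinf₁.ne, ha, limsup_congr hab]
    exact le_limsup_mul hc.frequently hb_nonneg
  · rw [div_le_iff_le_mul hb₀ hinf₁.ne, liminf_congr hab, mul_comm (liminf b l)]
    exact liminf_mul_le hc hb_nonneg (.inr hinf₁.ne) (.inr hb₀.ne')
  · rw [le_div_iff_mul_le hsup₀ hb₁.ne, limsup_congr hab, mul_comm c, mul_comm (liminf c l)]
    exact le_limsup_mul hb_nonneg.frequently hc
  · rw [div_le_iff_le_mul hsup₀ hb₁.ne, ← ha, liminf_congr hab, mul_comm c]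
    exact liminf_mul_le hb_nonneg hc (.inl hsup₀.ne') (.inl hb₁.ne)

end EReal

namespace VVDS

variable (f : VVDS E)

def majorant (σ : ℝ) : ℝ := ∑' n, Real.exp (σ * f.lam n) * ‖f.a n‖

theorem summable_majorant (σ : ℝ) : Summable fun n => Real.exp (σ * f.lam n) * ‖f.a n‖ := by
  simpa using f.abs_conv σ

theorem norm_term (s : ℂ) (n : ℕ) :
    ‖Complex.exp (s * f.lam n) • f.a n‖ = Real.exp (s.re * f.lam n) * ‖f.a n‖ := by
  rw [norm_smul, Complex.norm_exp, Complex.re_mul_ofReal]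

theorem norm_toFun_le_majorant (s : ℂ) : ‖f.toFun s‖ ≤ f.majorant s.re := by
  rw [majorant, ← tsum_congr (f.norm_term s)]
  exact norm_tsum_le_tsum_norm (by simpa only [f.norm_term s] using f.summable_majorant s.re)

theorem majorant_nonneg (σ : ℝ) : 0 ≤ f.majorant σ :=
  tsum_nonneg fun _ => by positivity

theorem majorant_mono : Monotone f.majorant := fun _ _ h =>
  (f.summable_majorant _).tsum_le_tsum (fun n => by
    gcongr
    exact (f.lam_pos n).le) (f.summable_majorant _)

theorem majorant_le_exp_mul {σ σ₀ : ℝ} (h : σ ≤ σ₀) :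
    f.majorant σ ≤ Real.exp ((σ - σ₀) * f.lam 0) * f.majorant σ₀ := by
  rw [majorant, majorant, ← tsum_mul_left]
  refine (f.summable_majorant σ).tsum_le_tsum (fun n => ?_) ((f.summable_majorant σ₀).mul_left _)
  rw [← mul_assoc, ← Real.exp_add]
  have hlam : f.lam 0 ≤ f.lam n := f.lam_strictMono.monotone n.zero_le
  gcongr
  nlinarith

theorem tendsto_majorant_atBot : Tendsto f.majorant atBot (𝓝 0) := by
  have hexp : Tendsto (fun σ : ℝ => Real.exp (σ * f.lam 0) * f.majorant 0) atBot (𝓝 0) := by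
    simpa using (Real.tendsto_exp_atBot.comp
      (tendsto_id.atBot_mul_const (f.lam_pos 0))).mul_const (f.majorant 0)
  refine tendsto_of_tendsto_of_tendsto_of_le_of_le' tendsto_const_nhds hexp
    (.of_forall f.majorant_nonneg) ?_
  filter_upwards [eventually_le_atBot 0] with σ hσ
  simpa using f.majorant_le_exp_mul hσ

theorem differentiable : Differentiable ℂ f.toFun := by
  intro s₀
  have hU : IsOpen {z : ℂ | z.re < s₀.re + 1} := isOpen_lt Complex.continuous_re continuous_const
  refine (Complex.differentiableOn_tsum_of_summable_norm (f.summable_majorant (s₀.re + 1))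
    (fun n => (((differentiable_id.mul_const _).cexp).smul_const (f.a n)).differentiableOn) hU
    fun n z hz => ?_).differentiableAt (hU.mem_nhds (by simp))
  rw [f.norm_term]
  gcongr
  exacts [(f.lam_pos n).le, hz.le]

theorem bddAbove_norm_line (σ : ℝ) :
    BddAbove (Set.range fun t : ℝ => ‖f.toFun (σ + t * Complex.I)‖) :=
  ⟨f.majorant σ, by
    rintro _ ⟨t, rfl⟩
    simpa using f.norm_toFun_le_majorant (σ + t * Complex.I)⟩

theorem norm_toFun_le_M (s : ℂ) : ‖f.toFun s‖ ≤ f.M s.re := by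
  conv_lhs => rw [← Complex.re_add_im s]
  exact le_ciSup (f.bddAbove_norm_line s.re) s.im

theorem M_nonneg (σ : ℝ) : 0 ≤ f.M σ := by
  simpa using (norm_nonneg _).trans (f.norm_toFun_le_M σ)

theorem M_le_majorant (σ : ℝ) : f.M σ ≤ f.majorant σ :=
  ciSup_le fun t => by simpa using f.norm_toFun_le_majorant (σ + t * Complex.I)

theorem tendsto_M_atBot : Tendsto f.M atBot (𝓝 0) :=
  tendsto_of_tendsto_of_tendsto_of_le_of_le tendsto_const_nhds f.tendsto_majorant_atBot
    f.M_nonneg f.M_le_majorant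

open Complex.HadamardThreeLines in
theorem M_le_rpow_mul_rpow {x y a b : ℝ} (hxy : x < y) (hb₀ : 0 ≤ b) (hb₁ : b ≤ 1)
    (hab : a + b = 1) : f.M (a * x + b * y) ≤ f.M x ^ a * f.M y ^ b := by
  have hd : 0 < y - x := sub_pos.2 hxy
  set F : ℂ → E := fun w => f.toFun (x + w * (y - x : ℝ))
  have hF : Differentiable ℂ F := f.differentiable.comp ((differentiable_id.mul_const _).const_add _)
  have hre (w : ℂ) : (x + w * (y - x : ℝ) : ℂ).re = x + w.re * (y - x) := by simp
  refine ciSup_le fun t => ?_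
  obtain ⟨s, hs⟩ : ∃ s : ℝ, s * (y - x) = t := ⟨t / (y - x), div_mul_cancel₀ _ hd.ne'⟩
  set z : ℂ := b + s * Complex.I
  have hz : z.re = b := by
    simp only [z, Complex.add_re, Complex.ofReal_re, Complex.re_ofReal_mul, Complex.I_re, mul_zero,
      add_zero]
  have hFz : F z = f.toFun (↑(a * x + b * y) + t * Complex.I) := by
    simp only [F, z]
    congr 1
    apply Complex.ext <;> simp
    · linear_combination (-x) * hab
    · linear_combination hs
  have hbdd : BddAbove (norm ∘ F '' verticalClosedStrip 0 1) := by
    refine ⟨f.majorant y, ?_⟩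
    rintro _ ⟨w, hw, rfl⟩
    refine (f.norm_toFun_le_majorant _).trans (f.majorant_mono ?_)
    rw [hre]
    nlinarith [hw.1, hw.2]
  have hedge (w : ℂ) : ‖F w‖ ≤ f.M (x + w.re * (y - x)) := hre w ▸ f.norm_toFun_le_M _
  have key := norm_le_interp_of_mem_verticalClosedStrip₀₁' F (z := z) (a := f.M x) (b := f.M y)
    (by simp [verticalClosedStrip, hz, hb₀, hb₁]) hF.diffContOnCl hbdd
    (fun w hw => by simpa [show w.re = 0 from hw] using hedge w)
    (fun w hw => by simpa [show w.re = 1 from hw] using hedge w)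
  rwa [hFz, hz, show 1 - b = a by linarith] at key

theorem M_lt_M {σ σ' : ℝ} (hσσ' : σ < σ') (hpos : 0 < f.M σ) : f.M σ < f.M σ' := by
  obtain ⟨σ₀, hσ₀M, hσ₀σ⟩ :=
    ((f.tendsto_M_atBot.eventually_lt_const hpos).and (eventually_lt_atBot σ)).exists
  have hd : 0 < σ' - σ₀ := by linarith
  set b := (σ - σ₀) / (σ' - σ₀)
  have hb₀ : 0 < b := div_pos (by linarith) hd
  have hb₁ : b < 1 := (div_lt_one hd).2 (by linarith)
  have hσ : (1 - b) * σ₀ + b * σ' = σ := by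
    simp only [b]
    field_simp
    ring
  by_contra! hle
  have := calc
    f.M σ ≤ f.M σ₀ ^ (1 - b) * f.M σ' ^ b := hσ ▸ f.M_le_rpow_mul_rpow (by linarith) hb₀.le hb₁.le (by ring)
    _ ≤ f.M σ₀ ^ (1 - b) * f.M σ ^ b := by
      have := f.M_nonneg σ₀
      gcongr
      exact f.M_nonneg σ'
    _ < f.M σ ^ (1 - b) * f.M σ ^ b := by
      have := f.M_nonneg σ₀
      gcongr
    _ = f.M σ := by rw [← Real.rpow_add hpos, sub_add_cancel, Real.rpow_one]
  exact this.false

theorem M_mono : Monotone f.M := fun σ σ' h => by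
  rcases (f.M_nonneg σ).eq_or_lt with h0 | hpos
  · exact h0 ▸ f.M_nonneg σ'
  rcases h.eq_or_lt with rfl | hlt
  · exact le_rfl
  exact (f.M_lt_M hlt hpos).le

theorem convexOn_M : ConvexOn ℝ Set.univ f.M :=
  LinearOrder.convexOn_of_lt convex_univ fun x _ y _ hxy a b ha hb hab =>
    (f.M_le_rpow_mul_rpow hxy hb.le (by linarith) hab).trans
      (Real.geom_mean_le_arith_mean2_weighted ha.le hb.le (f.M_nonneg x) (f.M_nonneg y) hab)

theorem continuous_M : Continuous f.M :=
  continuousOn_univ.1 (f.convexOn_M.continuousOn isOpen_univ)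

theorem tendsto_M_atTop_or_M_eq_zero : Tendsto f.M atTop atTop ∨ ∀ σ, f.M σ = 0 := by
  by_cases! hunbdd : ∀ b : ℝ, ∃ σ, b ≤ f.M σ
  · exact .inl (tendsto_atTop_atTop_of_monotone f.M_mono hunbdd)
  obtain ⟨b, hb⟩ := hunbdd
  obtain ⟨c, hc⟩ := f.differentiable.exists_eq_const_of_bounded <|
    isBounded_iff_forall_norm_le.2 ⟨b, by
      rintro _ ⟨s, rfl⟩
      exact (f.norm_toFun_le_M s).trans (hb s.re).le⟩
  have hc0 : c = 0 := by
    refine norm_le_zero_iff.1 (ge_of_tendsto f.tendsto_majorant_atBot (.of_forall fun σ => ?_))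
    simpa [hc] using f.norm_toFun_le_majorant σ
  exact .inr fun σ => by simp [M, hc, hc0]

theorem bddBelow_setOf_le_M {y : ℝ} (hy : 0 < y) : BddBelow {σ | y ≤ f.M σ} := by
  obtain ⟨B, hB⟩ := eventually_atBot.1 (f.tendsto_M_atBot.eventually_lt_const hy)
  exact ⟨B, fun σ hσ => not_lt.1 fun hσB => (hB σ hσB.le).not_ge hσ⟩

theorem Minv_le {y σ : ℝ} (hy : 0 < y) (h : y ≤ f.M σ) : f.Minv y ≤ σ :=
  csInf_le (f.bddBelow_setOf_le_M hy) h

theorem le_M_Minv {y σ : ℝ} (hy : 0 < y) (h : y ≤ f.M σ) : y ≤ f.M (f.Minv y) :=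
  (isClosed_le continuous_const f.continuous_M).csInf_mem ⟨σ, h⟩ (f.bddBelow_setOf_le_M hy)

theorem M_Minv (hM : Tendsto f.M atTop atTop) {y : ℝ} (hy : 0 < y) : f.M (f.Minv y) = y := by
  obtain ⟨σ, hσ⟩ := (hM.eventually_ge_atTop y).exists
  refine le_antisymm (not_lt.1 fun hlt => ?_) (f.le_M_Minv hy hσ)
  obtain ⟨σ', hyσ', hσ'⟩ := ((((f.continuous_M.tendsto _).eventually_const_lt hlt).filter_mono
    nhdsWithin_le_nhds).and (self_mem_nhdsWithin : Set.Iio (f.Minv y) ∈ 𝓝[<] f.Minv y)).exists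
  exact (f.Minv_le hy hyσ'.le).not_gt hσ'

theorem Minv_M {τ : ℝ} (hpos : 0 < f.M τ) : f.Minv (f.M τ) = τ := by
  refine (f.Minv_le hpos le_rfl).antisymm (not_lt.1 fun hlt => ?_)
  have hle := f.le_M_Minv hpos le_rfl
  exact (f.M_lt_M hlt (hpos.trans_le hle)).not_ge hle

theorem tendsto_Minv (hM : Tendsto f.M atTop atTop) : Tendsto f.Minv atTop atTop :=
  tendsto_atTop.2 fun T => by
    filter_upwards [eventually_gt_atTop 0, eventually_gt_atTop (f.M T)] with y hy hyT
    by_contra! h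
    have := f.M_mono h.le
    rw [f.M_Minv hM hy] at this
    linarith

theorem Minv_zero : f.Minv 0 = 0 := by
  simp [Minv, f.M_nonneg]

theorem Minv_eq_zero_of_M_eq_zero (h : ∀ σ, f.M σ = 0) (y : ℝ) : f.Minv y = 0 := by
  rcases le_or_gt y 0 with hy | hy
  · simp [Minv, h, hy]
  · simp [Minv, h, hy.not_ge]

end VVDS

theorem Filter.map_eq_of_eventually_inverse {α β : Type*} {la : Filter α} {lb : Filter β}
    {φ : α → β} {ψ : β → α} (hφ : Tendsto φ la lb) (hψ : Tendsto ψ lb la)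
    (hinv : ∀ᶠ y in lb, φ (ψ y) = y) : map φ la = lb :=
  le_antisymm hφ <| calc
    lb = map (φ ∘ ψ) lb := by rw [Function.comp_def, map_congr hinv, map_id']
    _ = map φ (map ψ lb) := map_map.symm
    _ ≤ map φ la := map_mono hψ

theorem VVDS.map_Minv_comp_M_atTop {f : VVDS E} {g : VVDS F} (hf : Tendsto f.M atTop atTop)
    (hg : Tendsto g.M atTop atTop) : map (g.Minv ∘ f.M) atTop = atTop :=
  map_eq_of_eventually_inverse ((g.tendsto_Minv hg).comp hf) ((f.tendsto_Minv hf).comp hg) <| by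
    filter_upwards [hg.eventually_gt_atTop 0] with τ hτ
    simp only [Function.comp_apply, f.M_Minv hf hτ, g.Minv_M hτ]

def relRittRatio (p q : ℕ) (f : VVDS E) (g : VVDS F) (σ : ℝ) : EReal :=
  ((Real.log^[p] (g.Minv (f.M σ)) / Real.log^[q] σ : ℝ) : EReal)

section RelativeRittOrder

variable {f : VVDS E} {g : VVDS F} {h : VVDS G} {p q m : ℕ}

theorem relRittLowerOrder_le_relRittOrder : relRittLowerOrder p q f g ≤ relRittOrder p q f g :=
  liminf_le_limsup

theorem tendsto_M_atTop_of_relRittLowerOrder_pos (hpos : 0 < relRittLowerOrder p q f g) :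
    Tendsto f.M atTop atTop ∧ Tendsto g.M atTop atTop := by
  -- `sInf` of an empty or unbounded set of reals is `0`, so a vanishing `M` makes every ratio `0`.
  have hzero (h0 : ∀ σ, g.Minv (f.M σ) = 0) : relRittLowerOrder p q f g = 0 := by
    simp [relRittLowerOrder, h0, Function.iterate_fixed Real.log_zero]
  exact ⟨f.tendsto_M_atTop_or_M_eq_zero.resolve_right fun hf =>
      hpos.ne' (hzero fun σ => by rw [hf, g.Minv_zero]),
    g.tendsto_M_atTop_or_M_eq_zero.resolve_right fun hg =>
      hpos.ne' (hzero fun _ => g.Minv_eq_zero_of_M_eq_zero hg _)⟩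

theorem relRittRatio_eventually_nonneg (hI : Tendsto (g.Minv ∘ f.M) atTop atTop) :
    0 ≤ᶠ[atTop] relRittRatio p q f g := by
  filter_upwards [((Real.tendsto_log_atTop.iterate p).comp hI).eventually_ge_atTop 0,
    (Real.tendsto_log_atTop.iterate q).eventually_ge_atTop 0] with σ hnum hden
  exact EReal.coe_nonneg.2 (div_nonneg hnum hden)

theorem relRittRatio_eventuallyEq_mul (hf : Tendsto f.M atTop atTop)
    (hg : Tendsto g.M atTop atTop) :
    relRittRatio m q f h =ᶠ[atTop]
      relRittRatio p q f g * (relRittRatio m p g h ∘ (g.Minv ∘ f.M)) := by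
  filter_upwards [hf.eventually_gt_atTop 0, ((Real.tendsto_log_atTop.iterate p).comp
    (VVDS.map_Minv_comp_M_atTop hf hg).le).eventually_ne_atTop 0] with σ hpos hlog
  simp only [relRittRatio, Pi.mul_apply, Function.comp_apply, g.M_Minv hg hpos]
  rw [← EReal.coe_mul, div_mul_div_cancel₀' (by exact hlog)]

end RelativeRittOrder

theorem stmt_9_general (f : VVDS E) (g : VVDS F) (h : VVDS G) (p q m : ℕ)
    (hf1 : (0 : EReal) < relRittLowerOrder m q f h)
    (hf3 : relRittOrder m q f h < ⊤)
    (hg1 : (0 : EReal) < relRittLowerOrder m p g h)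
    (hg3 : relRittOrder m p g h < ⊤)
    :
    (relRittLowerOrder m p g h = relRittOrder m p g h → relRittOrder p q f g = (((relRittOrder m q f h).toReal / (relRittOrder m p g h).toReal : ℝ) : EReal) ∧ relRittLowerOrder p q f g = (((relRittLowerOrder m q f h).toReal / (relRittLowerOrder m p g h).toReal : ℝ) : EReal)) ∧ (relRittLowerOrder m q f h = relRittOrder m q f h → relRittOrder p q f g = (((relRittLowerOrder m q f h).toReal / (relRittLowerOrder m p g h).toReal : ℝ) : EReal) ∧ relRittLowerOrder p q f g = (((relRittOrder m q f h).toReal / (relRittOrder m p g h).toReal : ℝ) : EReal)) := by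
  obtain ⟨hMf, -⟩ := tendsto_M_atTop_of_relRittLowerOrder_pos hf1
  obtain ⟨hMg, -⟩ := tendsto_M_atTop_of_relRittLowerOrder_pos hg1
  have hmap := VVDS.map_Minv_comp_M_atTop hMf hMg
  have hlimsup : limsup (relRittRatio m p g h ∘ (g.Minv ∘ f.M)) atTop = relRittOrder m p g h := by
    rw [limsup_comp, hmap]; rfl
  have hliminf :
      liminf (relRittRatio m p g h ∘ (g.Minv ∘ f.M)) atTop = relRittLowerOrder m p g h := by
    rw [liminf_comp, hmap]; rfl
  have hc := relRittRatio_eventually_nonneg (p := p) (q := q) hmap.le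
  have hmul := relRittRatio_eventuallyEq_mul (m := m) (h := h) (p := p) (q := q) hMf hMg
  have coe_toReal {x : EReal} (h₀ : 0 < x) (h₁ : x < ⊤) : (x.toReal : EReal) = x :=
    EReal.coe_toReal h₁.ne (EReal.bot_lt_zero.trans h₀).ne'
  have hf2 := relRittLowerOrder_le_relRittOrder (p := m) (q := q) (f := f) (g := h)
  have hg2 := relRittLowerOrder_le_relRittOrder (p := m) (q := p) (f := g) (g := h)
  rw [EReal.coe_div, EReal.coe_div, coe_toReal hf1 (hf2.trans_lt hf3),
    coe_toReal (hf1.trans_le hf2) hf3, coe_toReal hg1 (hg2.trans_lt hg3),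
    coe_toReal (hg1.trans_le hg2) hg3]
  refine ⟨fun hg => ?_, fun hf => ?_⟩
  · have key := EReal.limsup_liminf_eq_div_of_factor_liminf_eq_limsup hc hmul
      (hliminf ▸ hg1) (hlimsup ▸ hg3) (by rw [hliminf, hlimsup, hg])
    rw [hlimsup, hliminf] at key
    exact key
  · have key := EReal.limsup_liminf_eq_div_of_product_liminf_eq_limsup hc hmul
      (hliminf ▸ hg1) (hlimsup ▸ hg3) hf
    rw [hlimsup, hliminf] at key
    exact key

theorem stmt_9 (f : VVDS E) (g : VVDS F) (h : VVDS G) (p q m : ℕ)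
    (hf1 : (0 : EReal) < relRittLowerOrder m q f h)
    (hf2 : relRittLowerOrder m q f h ≤ relRittOrder m q f h)
    (hf3 : relRittOrder m q f h < ⊤)
    (hg1 : (0 : EReal) < relRittLowerOrder m p g h)
    (hg2 : relRittLowerOrder m p g h ≤ relRittOrder m p g h)
    (hg3 : relRittOrder m p g h < ⊤)
    :
    (relRittLowerOrder m p g h = relRittOrder m p g h → relRittOrder p q f g = (((relRittOrder m q f h).toReal / (relRittOrder m p g h).toReal : ℝ) : EReal) ∧ relRittLowerOrder p q f g = (((relRittLowerOrder m q f h).toReal / (relRittLowerOrder m p g h).toReal : ℝ) : EReal)) ∧ (relRittLowerOrder m q f h = relRittOrder m q f h → relRittOrder p q f g = (((relRittLowerOrder m q f h).toReal / (relRittLowerOrder m p g h).toReal : ℝ) : EReal) ∧ relRittLowerOrder p q f g = (((relRittOrder m q f h).toReal / (relRittOrder m p g h).toReal : ℝ) : EReal)) :=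
  stmt_9_general f g h p q m hf1 hf3 hg1 hg3
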